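/- arXiv:2312.03593 — 2 statements merged into one kernel-verified Lean document; each statement's English description precedes it below -/
import Mathlib

section
/- Let g : (k+1)^𝒳 → ℝ≥0 be a monotone normalized k-submodular function, w : 𝒳 → ℝ≥0 a weight function, ε ∈ (0,1], τ > 0, θ ≥ 0, let 𝟎 = x⁰ ⊑ x¹ ⊑ … ⊑ xᵐ = 𝐱 be a greedy chain for g, and let v be a k-set with g(v) ≥ τ and θ·w(v) ≤ ε·τ. Suppose that for every y ∈ E(v) ∖ E(𝐱) there is a k-set s_y ⊑ 𝐱 with y ∉ E(s_y) and max_{i∈[k]} Δ_{y,i}g(s_y) ≤ θ·w(y). Then g(𝐱) ≥ (1−ε)τ/2. -/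
/-- A `k`-set: an assignment of each ground element to one of `k` parts or to none
(`none` meaning the element belongs to no part).  This encodes a tuple
`(S_1, …, S_k)` of pairwise disjoint subsets of `X`. -/
abbrev KSet (X : Type*) (k : ℕ) := X → Option (Fin k)

namespace KSet

variable {X : Type*} {k : ℕ}

/-- The empty `k`-set `𝟎 = (∅, …, ∅)`. -/
def bot (X : Type*) (k : ℕ) : KSet X k := fun _ => none

/-- `le s t` is the partial order `s ⊑ t`, i.e. `Sᵢ ⊆ Tᵢ` for every `i ∈ [k]`. -/
def le (s t : KSet X k) : Prop := ∀ (x : X) (i : Fin k), s x = some i → t x = some i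

/-- The meet `s ⊓ t`, whose `i`-th component is `Sᵢ ∩ Tᵢ`. -/
def meet (s t : KSet X k) : KSet X k := fun x => if s x = t x then s x else none

/-- The join `s ⊔ t`, whose `i`-th component is `(Sᵢ ∪ Tᵢ) \ ⋃_{j ≠ i} (Sⱼ ∪ Tⱼ)`. -/
def join (s t : KSet X k) : KSet X k := fun x =>
  match s x, t x with
  | none, b => b
  | some i, none => some i
  | some i, some j => if i = j then some i else none

/-- The `k`-set `(x, i)` whose only nonempty component is `Sᵢ = {x}`. -/
def single [DecidableEq X] (x : X) (i : Fin k) : KSet X k :=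
  fun y => if y = x then some i else none

/-- `s ⊔ (x, i)`: add the element `x` to the `i`-th part of `s`
(intended for `x ∉ E(s)`). -/
def add [DecidableEq X] (s : KSet X k) (x : X) (i : Fin k) : KSet X k :=
  Function.update s x (some i)

end KSet

/-- The marginal gain `Δ_{x,i} g (s) = g (s ⊔ (x,i)) - g s`. -/
def marg {X : Type*} [DecidableEq X] {k : ℕ} (g : KSet X k → ℝ) (s : KSet X k)
    (x : X) (i : Fin k) : ℝ :=
  g (KSet.add s x i) - g s

/-- `g` is `k`-submodular: `g (s ⊓ t) + g (s ⊔ t) ≤ g s + g t` for all `k`-sets. -/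
def KSubmodular {X : Type*} {k : ℕ} (g : KSet X k → ℝ) : Prop :=
  ∀ s t : KSet X k, g (KSet.meet s t) + g (KSet.join s t) ≤ g s + g t

/-- `g` is monotone with respect to `⊑`. -/
def KMonotone {X : Type*} {k : ℕ} (g : KSet X k → ℝ) : Prop :=
  ∀ s t : KSet X k, KSet.le s t → g s ≤ g t

/-- The weight `w(s) = ∑_{x ∈ E(s)} w x` of a `k`-set. -/
def wtot {X : Type*} [Fintype X] {k : ℕ} (w : X → ℝ) (s : KSet X k) : ℝ :=
  ∑ x ∈ Finset.univ.filter (fun x => s x ≠ none), w x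

/-- A greedy chain for `g`: `c 0 = 𝟎` and each step adds one new element at a
position maximizing the marginal gain over `i ∈ [k]`. -/
def GreedyChain {X : Type*} [DecidableEq X] {k : ℕ} (g : KSet X k → ℝ) (m : ℕ)
    (c : ℕ → KSet X k) : Prop :=
  c 0 = KSet.bot X k ∧
  ∀ p, p < m → ∃ (xp : X) (ip : Fin k),
    c p xp = none ∧
    c (p + 1) = KSet.add (c p) xp ip ∧
    ∀ i : Fin k, marg g (c p) xp i ≤ marg g (c p) xp ip


/-!
Let `o ⊳ v` (`o.overlay v` below) be the `k`-set that agrees with `o` on `E(o)` and with `v`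
elsewhere. Along the greedy chain, passing from `xᵖ ⊳ v` to `xᵖ⁺¹ ⊳ v` moves one element of `v` to
the greedy position or adds it; by orthant submodularity (marginal gains decrease along `⊑`) this
loses at most the greedy gain `g(xᵖ⁺¹) - g(xᵖ)`. Telescoping gives `g(v) ≤ g(𝐱 ⊳ v) + g(𝐱)`. The
`k`-set `𝐱 ⊳ v` extends `𝐱` by the elements `y ∈ E(v) \ E(𝐱)`, each of marginal gain at most
`θ·w(y)` over `𝐱 ⊒ s_y`, so `g(𝐱 ⊳ v) ≤ g(𝐱) + θ·w(v) ≤ g(𝐱) + ε·τ`, whence `τ ≤ 2·g(𝐱) + ε·τ`.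
-/

open Finset

namespace KSet

variable {X : Type*} {k : ℕ}

def overlay (s t : KSet X k) : KSet X k := fun z => (s z).or (t z)

lemma le_overlay (s t : KSet X k) : s.le (s.overlay t) := by
  intro z j hz
  simp [overlay, hz]

lemma bot_overlay (t : KSet X k) : (bot X k).overlay t = t := by
  funext z
  simp [overlay, bot]

lemma eq_none_of_le {s t : KSet X k} (hst : s.le t) {y : X} (hty : t y = none) :
    s y = none := by
  cases hs : s y with
  | none => rfl
  | some j => simp [hst y j hs] at hty

variable [DecidableEq X]

lemma le_add {s : KSet X k} {y : X} (hy : s y = none) (i : Fin k) : s.le (s.add y i) := by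
  intro z j hz
  have hzy : z ≠ y := by rintro rfl; simp_all
  simpa [add, Function.update_of_ne hzy] using hz

lemma add_overlay (s t : KSet X k) (x : X) (i : Fin k) :
    (s.add x i).overlay t = (s.overlay t).add x i := by
  funext z
  by_cases hz : z = x
  · subst hz; simp [overlay, add]
  · simp [overlay, add, Function.update_of_ne hz]

lemma meet_add_of_le {s t : KSet X k} (hst : s.le t) {y : X} (hty : t y = none) (i : Fin k) :
    meet (s.add y i) t = s := by
  funext z
  by_cases hz : z = y
  · subst hz; simp [meet, add, hty, eq_none_of_le hst hty]
  · simp only [meet, add, Function.update_of_ne hz]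
    cases hs : s z with
    | none => cases t z <;> simp
    | some j => simp [hst z j hs]

lemma join_add_of_le {s t : KSet X k} (hst : s.le t) {y : X} (hty : t y = none) (i : Fin k) :
    join (s.add y i) t = t.add y i := by
  funext z
  by_cases hz : z = y
  · subst hz; simp [join, add, hty]
  · simp only [join, add, Function.update_of_ne hz]
    cases hs : s z with
    | none => simp
    | some j => simp [hst z j hs]

end KSet

section

variable {X : Type*} [DecidableEq X] {k : ℕ} {g : KSet X k → ℝ}

lemma KMonotone.le_add (hmono : KMonotone g) {s : KSet X k} {y : X} (hy : s y = none)
    (i : Fin k) : g s ≤ g (s.add y i) :=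
  hmono _ _ (KSet.le_add hy i)

lemma KSubmodular.marg_le_of_le (hsub : KSubmodular g) {s t : KSet X k} (hst : s.le t) {y : X}
    (hty : t y = none) (i : Fin k) : marg g t y i ≤ marg g s y i := by
  have h := hsub (s.add y i) t
  rw [KSet.meet_add_of_le hst hty, KSet.join_add_of_le hst hty] at h
  unfold marg
  linarith

lemma KSubmodular.le_add_greedy_marg (hsub : KSubmodular g) (hmono : KMonotone g)
    {s o : KSet X k} (hso : s.le o) {x : X} (hx : s x = none) {ip : Fin k}
    (hmax : ∀ i, marg g s x i ≤ marg g s x ip) :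
    g o ≤ g (o.add x ip) + marg g s x ip := by
  cases hox : o x with
  | none =>
    have h₁ := hmono.le_add hox ip
    have h₂ := hmono.le_add hx ip
    unfold marg
    linarith
  | some i' =>
    set t : KSet X k := Function.update o x none
    have ht : t x = none := by simp [t]
    have hst : s.le t := by
      intro z j hz
      have hzx : z ≠ x := by rintro rfl; simp_all
      simpa [t, Function.update_of_ne hzx] using hso z j hz
    have hot : o = t.add x i' := by simp [t, KSet.add, ← hox]
    have hoip : o.add x ip = t.add x ip := by simp [t, KSet.add]
    have hgo : g o = g t + marg g t x i' := by rw [marg, ← hot]; ring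
    calc g o = g t + marg g t x i' := hgo
      _ ≤ g (t.add x ip) + marg g s x ip :=
        add_le_add (hmono.le_add ht ip) ((hsub.marg_le_of_le hst ht i').trans (hmax i'))
      _ = g (o.add x ip) + marg g s x ip := by rw [hoip]

lemma GreedyChain.le_overlay_add (hsub : KSubmodular g) (hmono : KMonotone g)
    (hnorm : g (KSet.bot X k) = 0) {m : ℕ} {c : ℕ → KSet X k} (hc : GreedyChain g m c)
    (v : KSet X k) {p : ℕ} (hp : p ≤ m) : g v ≤ g ((c p).overlay v) + g (c p) := by
  induction p with
  | zero => rw [hc.1, KSet.bot_overlay, hnorm, add_zero]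
  | succ p ih =>
    obtain ⟨x, ip, hx, hstep, hmax⟩ := hc.2 p hp
    have hexch := hsub.le_add_greedy_marg hmono (KSet.le_overlay (c p) v) hx hmax
    have hprev := ih (by omega)
    rw [hstep, KSet.add_overlay]
    unfold marg at hexch
    linarith

lemma KSubmodular.le_add_sum_of_marg_le [Fintype X] (hsub : KSubmodular g) {s t : KSet X k}
    (hst : s.le t) (b : X → ℝ) (hb : ∀ y, s y = none → t y ≠ none → ∀ i, marg g s y i ≤ b y) :
    g t ≤ g s + ∑ y ∈ univ.filter (fun y => s y = none ∧ t y ≠ none), b y := by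
  set N := univ.filter (fun y => s y = none ∧ t y ≠ none)
  have hpart : ∀ F ⊆ N, g (F.piecewise t s) ≤ g s + ∑ y ∈ F, b y := by
    intro F
    induction F using Finset.induction_on with
    | empty => simp
    | insert y F hyF ih =>
      intro hF
      obtain ⟨hsy, hty⟩ := (mem_filter.mp (hF (mem_insert_self y F))).2
      obtain ⟨i, hi⟩ := Option.ne_none_iff_exists'.mp hty
      have hle : s.le (F.piecewise t s) := by
        intro z j hz
        have hzF : z ∉ F := fun hzF => by
          simp [(mem_filter.mp (hF (mem_insert_of_mem hzF))).2.1] at hz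
        rwa [piecewise_eq_of_notMem _ _ _ hzF]
      have hFy : F.piecewise t s y = none := by rw [piecewise_eq_of_notMem _ _ _ hyF, hsy]
      have hmarg := (hsub.marg_le_of_le hle hFy i).trans (hb y hsy hty i)
      have hprev := ih ((subset_insert y F).trans hF)
      rw [piecewise_insert, hi, sum_insert hyF]
      unfold marg KSet.add at hmarg
      linarith
  have hN : N.piecewise t s = t := by
    funext z
    by_cases hz : z ∈ N
    · exact piecewise_eq_of_mem _ _ _ hz
    rw [piecewise_eq_of_notMem _ _ _ hz]
    cases hs : s z with
    | none => simpa [N, hs, eq_comm] using hz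
    | some j => exact (hst z j hs).symm
  simpa [hN] using hpart N subset_rfl

end

theorem good_elements_monotone_general {X : Type*} [Fintype X] [DecidableEq X] {k : ℕ}
    (g : KSet X k → ℝ) (hsub : KSubmodular g)
    (hmono : KMonotone g) (hnorm : g (KSet.bot X k) = 0)
    (w : X → ℝ) (hw : ∀ x, 0 ≤ w x)
    (ε τ θ : ℝ) (hθ : 0 ≤ θ)
    (m : ℕ) (c : ℕ → KSet X k) (hc : GreedyChain g m c)
    (v : KSet X k) (hgv : τ ≤ g v) (hwv : θ * wtot w v ≤ ε * τ)
    (hgood : ∀ y : X, v y ≠ none → c m y = none →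
      ∃ s : KSet X k, KSet.le s (c m) ∧ s y = none ∧
        ∀ i : Fin k, marg g s y i ≤ θ * w y) :
    (1 - ε) * τ / 2 ≤ g (c m) := by
  have hchain := hc.le_overlay_add hsub hmono hnorm v le_rfl
  have hext := hsub.le_add_sum_of_marg_le (KSet.le_overlay (c m) v) (fun y => θ * w y) <| by
    intro y hcy hoy i
    simp only [KSet.overlay, hcy, Option.none_or] at hoy
    obtain ⟨s, hs, hsy, hsmarg⟩ := hgood y hoy hcy
    exact (hsub.marg_le_of_le hs hcy i).trans (hsmarg i)
  have hnew : θ * ∑ y ∈ univ.filter (fun y => c m y = none ∧ (c m).overlay v y ≠ none), w y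
      ≤ ε * τ := by
    refine le_trans (mul_le_mul_of_nonneg_left ?_ hθ) hwv
    refine sum_le_sum_of_subset_of_nonneg (fun y hy => ?_) (fun y _ _ => hw y)
    simp_all [KSet.overlay]
  rw [mul_sum] at hnew
  linarith

/-- Monotone good-elements bound: for a monotone normalized
`k`-submodular `g`, weights `w ≥ 0`, `ε ∈ (0,1]`, `τ > 0`, `θ ≥ 0`, a greedy
chain ending in `𝐱 = c m`, and a `k`-set `v` with `g v ≥ τ` and `θ·w(v) ≤ ε·τ`,
if every `y ∈ E(v) \ E(𝐱)` admits a `k`-set `s_y ⊑ 𝐱` with `y ∉ E(s_y)` and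
`max_{i ∈ [k]} Δ_{y,i} g (s_y) ≤ θ·w(y)`, then `g 𝐱 ≥ (1-ε)τ/2`. -/
theorem good_elements_monotone {X : Type*} [Fintype X] [DecidableEq X] {k : ℕ}
    (g : KSet X k → ℝ) (hnn : ∀ s : KSet X k, 0 ≤ g s) (hsub : KSubmodular g)
    (hmono : KMonotone g) (hnorm : g (KSet.bot X k) = 0)
    (w : X → ℝ) (hw : ∀ x, 0 ≤ w x)
    (ε τ θ : ℝ) (hε0 : 0 < ε) (hε1 : ε ≤ 1) (hτ : 0 < τ) (hθ : 0 ≤ θ)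
    (m : ℕ) (c : ℕ → KSet X k) (hc : GreedyChain g m c)
    (v : KSet X k) (hgv : τ ≤ g v) (hwv : θ * wtot w v ≤ ε * τ)
    (hgood : ∀ y : X, v y ≠ none → c m y = none →
      ∃ s : KSet X k, KSet.le s (c m) ∧ s y = none ∧
        ∀ i : Fin k, marg g s y i ≤ θ * w y) :
    (1 - ε) * τ / 2 ≤ g (c m) :=
  good_elements_monotone_general g hsub hmono hnorm w hw ε τ θ hθ m c hc v hgv hwv hgood
end

section
/- (Theorem 1, monotone case) Let g : (k+1)^𝒳 → ℝ≥0 be a monotone normalized k-submodular function, w : 𝒳 → ℝ>0 a positive weight function, τ > 0 and ε ∈ (0,1], and suppose there exists a k-set v with g(v) ≥ τ and w(v) ≤ W̄. Then the k-set 𝐬 returned by Algorithm 1 with inputs (τ, W̄, ε) satisfies w(𝐬) ≤ ((3−ε)/(2ε))·W̄ and g(𝐬) ≥ (1−ε)τ/2. -/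
/-- A choice of position in `[k]` maximizing `f`. -/
noncomputable def argmaxFin {k : ℕ} [NeZero k] (f : Fin k → ℝ) : Fin k :=
  Classical.choose (Finset.exists_max_image Finset.univ f
    ⟨⟨0, Nat.pos_of_ne_zero (NeZero.ne k)⟩, Finset.mem_univ _⟩)

open Classical in
/-- One step of Algorithm 1, processing the arriving element `x` with current
solution `s`, threshold `τ`, density threshold `θ` and cost upper bound `A`:
if `x` is big (`w x ≤ A` and `max_i g((x,i)) ≥ τ`) then restart from `(x,i')`
with `i'` maximizing `g((x,i))`; otherwise add `(x,i')` with `i'` maximizing the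
marginal gain, provided `Δ_{x,i'}g(s)/w(x) ≥ θ` and `w(s) + w(x) ≤ A`. -/
noncomputable def alg1Step {X : Type*} [Fintype X] [DecidableEq X] {k : ℕ} [NeZero k]
    (g : KSet X k → ℝ) (w : X → ℝ) (τ θ A : ℝ) (s : KSet X k) (x : X) : KSet X k :=
  if w x ≤ A ∧ τ ≤ g (KSet.single x (argmaxFin fun i => g (KSet.single x i))) then
    KSet.single x (argmaxFin fun i => g (KSet.single x i))
  else if θ ≤ marg g s x (argmaxFin fun i => marg g s x i) / w x ∧ wtot w s + w x ≤ A then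
    KSet.add s x (argmaxFin fun i => marg g s x i)
  else s

/-- Algorithm 1: starting from `𝟎`, process the elements of the ground set in
their arrival order `order`. -/
noncomputable def alg1 {X : Type*} [Fintype X] [DecidableEq X] {k : ℕ} [NeZero k]
    (g : KSet X k → ℝ) (w : X → ℝ) (τ θ A : ℝ) (order : List X) : KSet X k :=
  order.foldl (alg1Step g w τ θ A) (KSet.bot X k)

/-- `x` is a big element: `w x ≤ A` and `max_{i ∈ [k]} g((x,i)) ≥ τ`. -/
def IsBig {X : Type*} [DecidableEq X] {k : ℕ} (g : KSet X k → ℝ) (w : X → ℝ)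
    (τ A : ℝ) (x : X) : Prop :=
  w x ≤ A ∧ ∃ i : Fin k, τ ≤ g (KSet.single x i)

lemma le_argmaxFin {k : ℕ} [NeZero k] (f : Fin k → ℝ) (i : Fin k) : f i ≤ f (argmaxFin f) :=
  (Classical.choose_spec (Finset.exists_max_image Finset.univ f
    ⟨⟨0, Nat.pos_of_ne_zero (NeZero.ne k)⟩, Finset.mem_univ _⟩)).2 i (Finset.mem_univ i)

namespace KSet

variable {X : Type*} {k : ℕ}

lemma eq_none_of_le_s16 {s t : KSet X k} (h : le s t) {x : X} (hx : t x = none) : s x = none := by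
  cases hsx : s x with
  | none => rfl
  | some j => simp [h x j hsx] at hx

variable [DecidableEq X]

lemma add_apply (s : KSet X k) (x : X) (i : Fin k) (y : X) :
    add s x i y = if y = x then some i else s y :=
  Function.update_apply s x (some i) y

lemma le_add_s16 {s : KSet X k} {x : X} (hx : s x = none) (i : Fin k) : le s (add s x i) := by
  intro y j hy
  have hyx : y ≠ x := by rintro rfl; simp [hx] at hy
  rwa [add_apply, if_neg hyx]

lemma le_update_none {s t : KSet X k} (h : le s t) {x : X} (hx : s x = none) :
    le s (Function.update t x none) := by
  intro y j hy
  have hyx : y ≠ x := by rintro rfl; simp [hx] at hy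
  rw [Function.update_of_ne hyx]
  exact h y j hy

def fill (s v : KSet X k) (D : Finset X) : KSet X k :=
  fun y => if s y = none ∧ y ∈ D then v y else s y

lemma le_fill (s v : KSet X k) (D : Finset X) : le s (fill s v D) := by
  intro y j hy
  simp [fill, hy]

lemma fill_empty (s v : KSet X k) : fill s v ∅ = s := by
  funext y
  simp [fill]

lemma fill_bot_univ [Fintype X] (v : KSet X k) : fill (bot X k) v Finset.univ = v := by
  funext y
  simp [fill, bot]

lemma fill_add (s v : KSet X k) (D : Finset X) (x : X) (i : Fin k) :
    fill (add s x i) v D = add (fill s v D) x i := by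
  funext y
  rcases eq_or_ne y x with rfl | hne
  · simp [fill, add_apply]
  · simp [fill, add_apply, hne]

lemma update_fill_univ [Fintype X] {s : KSet X k} {x : X} (hx : s x = none) (v : KSet X k) :
    Function.update (fill s v Finset.univ) x (v x) = fill s v Finset.univ := by
  conv_rhs => rw [← Function.update_eq_self x (fill s v Finset.univ)]
  simp [fill, hx]

end KSet

open KSet

section Marginals

variable {X : Type*} [DecidableEq X] {k : ℕ} {g : KSet X k → ℝ}

lemma marg_nonneg (hmono : KMonotone g) {s : KSet X k} {x : X} (hx : s x = none) (i : Fin k) :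
    0 ≤ marg g s x i :=
  sub_nonneg.mpr (hmono s _ (le_add_s16 hx i))

/-- Orthant submodularity. -/
lemma marg_le_marg_of_le (hsub : KSubmodular g) {s t : KSet X k} (hst : le s t) {x : X}
    (hx : t x = none) (i : Fin k) : marg g t x i ≤ marg g s x i := by
  have hsx : s x = none := eq_none_of_le_s16 hst hx
  have hmeet : meet (add s x i) t = s := by
    funext y
    rcases eq_or_ne y x with rfl | hne
    · simp [meet, KSet.add_apply, hx, hsx]
    · simp only [meet, KSet.add_apply, if_neg hne]
      cases hsy : s y with
      | none => cases t y <;> simp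
      | some j => simp [hst y j hsy]
  have hjoin : join (add s x i) t = add t x i := by
    funext y
    rcases eq_or_ne y x with rfl | hne
    · simp [join, KSet.add_apply, hx]
    · simp only [join, KSet.add_apply, if_neg hne]
      cases hsy : s y with
      | none => simp
      | some j => simp [hst y j hsy]
  have := hsub (add s x i) t
  rw [hmeet, hjoin] at this
  simp only [marg]
  linarith

lemma apply_update_le_add_marg (hsub : KSubmodular g) (hmono : KMonotone g) {s t : KSet X k}
    (hst : le s t) {x : X} (hx : t x = none) {i : Fin k}
    (hi : ∀ j, marg g s x j ≤ marg g s x i) (o : Option (Fin k)) :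
    g (Function.update t x o) ≤ g t + marg g s x i := by
  cases o with
  | none =>
    rw [← hx, Function.update_eq_self]
    linarith [marg_nonneg hmono (eq_none_of_le_s16 hst hx) i]
  | some j =>
    have := marg_le_marg_of_le hsub hst hx j
    have := hi j
    simp only [marg, add] at *
    linarith

lemma fill_le_add_sum (hsub : KSubmodular g) (s v : KSet X k) {B : X → ℝ}
    (hB : ∀ x i, s x = none → v x = some i → marg g s x i ≤ B x) (D : Finset X) :
    g (fill s v D) ≤ g s + ∑ x ∈ D.filter (fun x => s x = none ∧ v x ≠ none), B x := by
  induction D using Finset.induction_on with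
  | empty => simp [fill_empty]
  | @insert a D ha ih =>
    by_cases hnew : s a = none ∧ v a ≠ none
    · obtain ⟨hsa, hva⟩ := hnew
      obtain ⟨i, hi⟩ := Option.ne_none_iff_exists'.mp hva
      have heq : fill s v (insert a D) = add (fill s v D) a i := by
        funext y
        by_cases hya : y = a
        · subst hya; simp [fill, KSet.add_apply, hsa, hi]
        · simp [fill, KSet.add_apply, hya]
      have hfresh : fill s v D a = none := by simp [fill, ha, hsa]
      have hgain := (marg_le_marg_of_le hsub (le_fill s v D) hfresh i).trans (hB a i hsa hi)
      rw [heq, Finset.filter_insert, if_pos ⟨hsa, hva⟩, Finset.sum_insert (by simp [ha])]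
      simp only [marg] at hgain
      linarith
    · have heq : fill s v (insert a D) = fill s v D := by
        funext y
        by_cases hya : y = a
        · subst hya
          by_cases hsy : s y = none
          · simp [fill, hsy, show v y = none by tauto]
          · simp [fill, hsy]
        · simp [fill, hya]
      rwa [heq, Finset.filter_insert, if_neg hnew]

end Marginals

section Weight

variable {X : Type*} [Fintype X] {k : ℕ} {w : X → ℝ}

lemma wtot_bot (w : X → ℝ) : wtot w (bot X k) = 0 := by
  simp [wtot, bot]

lemma le_wtot (hw : ∀ x, 0 ≤ w x) {v : KSet X k} {x : X} (hx : v x ≠ none) :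
    w x ≤ wtot w v :=
  Finset.single_le_sum (fun y _ => hw y) (by simpa using hx)

variable [DecidableEq X]

lemma wtot_single (w : X → ℝ) (x : X) (i : Fin k) : wtot w (single x i) = w x := by
  rw [wtot, show Finset.univ.filter (fun y => single x i y ≠ none) = {x} by
    ext y; simp [single]]
  simp

lemma wtot_add {s : KSet X k} {x : X} (hx : s x = none) (i : Fin k) :
    wtot w (add s x i) = wtot w s + w x := by
  rw [wtot, wtot, show Finset.univ.filter (fun y => add s x i y ≠ none)
      = insert x (Finset.univ.filter fun y => s y ≠ none) by
    ext y; by_cases hyx : y = x <;> simp [KSet.add_apply, hyx],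
    Finset.sum_insert (by simp [hx]), add_comm]

lemma wtot_add_le (hw : ∀ x, 0 ≤ w x) (s : KSet X k) (x : X) (i : Fin k) :
    wtot w (add s x i) ≤ wtot w s + w x := by
  cases hx : s x with
  | none => rw [wtot_add hx]
  | some j =>
    have hsupp : Finset.univ.filter (fun y => add s x i y ≠ none)
        = Finset.univ.filter (fun y => s y ≠ none) := by
      ext y; by_cases hyx : y = x <;> simp [KSet.add_apply, hyx, hx]
    rw [wtot, hsupp, ← wtot]
    linarith [hw x]

end Weight

section GreedyChain

variable {X : Type*} [DecidableEq X] {k : ℕ} {g : KSet X k → ℝ}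

lemma exists_greedyChain_add {s : KSet X k} (hs : ∃ m c, GreedyChain g m c ∧ c m = s) {x : X}
    (hx : s x = none) {i : Fin k} (hi : ∀ j, marg g s x j ≤ marg g s x i) :
    ∃ m c, GreedyChain g m c ∧ c m = add s x i := by
  obtain ⟨m, c, ⟨hc0, hstep⟩, rfl⟩ := hs
  refine ⟨m + 1, Function.update c (m + 1) (add (c m) x i), ⟨?_, fun p hp => ?_⟩,
    Function.update_self _ _ _⟩
  · rwa [Function.update_of_ne (by omega)]
  · rw [Function.update_of_ne (by omega : p ≠ m + 1)]
    rcases Nat.lt_or_ge p m with hpm | hpm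
    · rw [Function.update_of_ne (by omega : p + 1 ≠ m + 1)]
      exact hstep p hpm
    · obtain rfl : p = m := by omega
      exact ⟨x, i, hx, Function.update_self _ _ _, hi⟩

lemma GreedyChain.add_le_fill (hsub : KSubmodular g) (hmono : KMonotone g) [Fintype X]
    (v : KSet X k) {m : ℕ} {c : ℕ → KSet X k} (hc : GreedyChain g m c) :
    g v + g (bot X k) ≤ g (fill (c m) v Finset.univ) + g (c m) := by
  induction m with
  | zero => rw [hc.1, fill_bot_univ, add_comm]
  | succ m ih =>
    obtain ⟨x, i, hx, hstep, hi⟩ := hc.2 m (Nat.lt_succ_self m)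
    have ih := ih ⟨hc.1, fun p hp => hc.2 p (by omega)⟩
    -- `t` is the filled set with `x` removed; both filled sets are `t` with `x` put back.
    set t := Function.update (fill (c m) v Finset.univ) x none
    have htx : t x = none := Function.update_self _ _ _
    have hfill : Function.update t x (v x) = fill (c m) v Finset.univ := by
      rw [Function.update_idem, update_fill_univ hx]
    have hfill' : add t x i = fill (add (c m) x i) v Finset.univ := by
      rw [fill_add, add, add, Function.update_idem]
    have hgain := apply_update_le_add_marg hsub hmono
      (le_update_none (le_fill _ v _) hx) htx hi (v x)
    have hmono_t := hmono t _ (le_add_s16 htx i)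
    rw [hfill] at hgain
    rw [hfill'] at hmono_t
    rw [hstep]
    simp only [marg] at hgain
    linarith

end GreedyChain

section Algorithm

variable {X : Type*} [Fintype X] [DecidableEq X] {k : ℕ} [NeZero k]
  {g : KSet X k → ℝ} {w : X → ℝ} {τ θ A : ℝ}

lemma wtot_alg1Step_le (hw : ∀ x, 0 ≤ w x) {s : KSet X k} (hs : wtot w s ≤ A) (x : X) :
    wtot w (alg1Step g w τ θ A s x) ≤ A := by
  unfold alg1Step
  split_ifs with hbig hadd
  · rw [wtot_single]; exact hbig.1
  · exact (wtot_add_le hw s x _).trans hadd.2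
  · exact hs

lemma wtot_foldl_alg1Step_le (hw : ∀ x, 0 ≤ w x) (l : List X) {s : KSet X k}
    (hs : wtot w s ≤ A) : wtot w (l.foldl (alg1Step g w τ θ A) s) ≤ A := by
  induction l generalizing s with
  | nil => exact hs
  | cons x l ih => exact ih (wtot_alg1Step_le hw hs x)

lemma le_apply_alg1Step_of_isBig (s : KSet X k) {x : X} (hx : IsBig g w τ A x) :
    τ ≤ g (alg1Step g w τ θ A s x) := by
  obtain ⟨hwx, i, hi⟩ := hx
  have hmax := hi.trans (le_argmaxFin (fun i => g (single x i)) i)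
  rw [alg1Step, if_pos ⟨hwx, hmax⟩]
  exact hmax

lemma le_apply_alg1Step_of_le (hw : ∀ x, 0 < w x) (hθ : 0 ≤ θ) {s : KSet X k}
    (hs : τ ≤ g s) (x : X) : τ ≤ g (alg1Step g w τ θ A s x) := by
  unfold alg1Step
  split_ifs with hbig hadd
  · exact hbig.2
  · have hgain := (le_div_iff₀ (hw x)).mp hadd.1
    rw [marg] at hgain
    nlinarith [hw x]
  · exact hs

lemma le_apply_foldl_alg1Step (hw : ∀ x, 0 < w x) (hθ : 0 ≤ θ) (l : List X) {s : KSet X k}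
    (h : (∃ x ∈ l, IsBig g w τ A x) ∨ τ ≤ g s) :
    τ ≤ g (l.foldl (alg1Step g w τ θ A) s) := by
  induction l generalizing s with
  | nil => simpa using h
  | cons x l ih =>
    refine ih ?_
    rcases h with ⟨y, hy, hbig⟩ | hs
    · rcases List.mem_cons.mp hy with rfl | hyl
      · exact .inr (le_apply_alg1Step_of_isBig s hbig)
      · exact .inl ⟨y, hyl, hbig⟩
    · exact .inr (le_apply_alg1Step_of_le hw hθ hs x)

lemma alg1Step_of_not_isBig {x : X} (hx : ¬ IsBig g w τ A x) (s : KSet X k) :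
    alg1Step g w τ θ A s x =
      if θ ≤ marg g s x (argmaxFin fun i => marg g s x i) / w x ∧ wtot w s + w x ≤ A then
        add s x (argmaxFin fun i => marg g s x i)
      else s := by
  rw [alg1Step, if_neg fun h => hx ⟨h.1, _, h.2⟩]

end Algorithm

section Invariant

variable {X : Type*} [Fintype X] [DecidableEq X] {k : ℕ}
  {g : KSet X k → ℝ} {w : X → ℝ} {θ A : ℝ}

/-- The state `s` of Algorithm 1 while no big element arrives, `l` being the elements still to
arrive. -/
structure Alg1Invariant (g : KSet X k → ℝ) (w : X → ℝ) (θ A : ℝ) (l : List X)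
    (s : KSet X k) : Prop where
  fresh : ∀ x ∈ l, s x = none
  density : θ * wtot w s ≤ g s
  greedy : ∃ m c, GreedyChain g m c ∧ c m = s
  rejected : ∀ x ∉ l, s x = none → (∀ i, marg g s x i ≤ θ * w x) ∨ A < wtot w s + w x

lemma alg1Invariant_bot (hg : 0 ≤ g (bot X k)) {l : List X} (hl : ∀ x, x ∈ l) :
    Alg1Invariant g w θ A l (bot X k) where
  fresh _ _ := rfl
  density := by rwa [wtot_bot, mul_zero]
  greedy := ⟨0, fun _ => bot X k, ⟨rfl, fun _ hp => absurd hp (Nat.not_lt_zero _)⟩, rfl⟩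
  rejected x hx := absurd (hl x) hx

namespace Alg1Invariant

variable {l : List X} {s : KSet X k} {x : X}

lemma accept (hsub : KSubmodular g) (hw : ∀ x, 0 ≤ w x)
    (hinv : Alg1Invariant g w θ A (x :: l) s) (hxl : x ∉ l) {i : Fin k}
    (hi : ∀ j, marg g s x j ≤ marg g s x i) (hgain : θ * w x ≤ marg g s x i) :
    Alg1Invariant g w θ A l (add s x i) := by
  have hx : s x = none := hinv.fresh x List.mem_cons_self
  have hwt := wtot_add (w := w) hx i
  refine ⟨fun y hy => ?_, ?_, exists_greedyChain_add hinv.greedy hx hi, fun y hy hys => ?_⟩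
  · rw [KSet.add_apply, if_neg (by rintro rfl; exact hxl hy)]
    exact hinv.fresh y (List.mem_cons_of_mem x hy)
  · rw [hwt, mul_add]
    simp only [marg] at hgain
    linarith [hinv.density]
  · have hyx : y ≠ x := by rintro rfl; simp [KSet.add_apply] at hys
    rw [KSet.add_apply, if_neg hyx] at hys
    rcases hinv.rejected y (by simp [hyx, hy]) hys with hlow | hbudget
    · have hys' : add s x i y = none := by simpa [KSet.add_apply, hyx]
      exact .inl fun j => (marg_le_marg_of_le hsub (le_add_s16 hx i) hys' j).trans (hlow j)
    · exact .inr (by rw [hwt]; linarith [hw x])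

lemma reject (hinv : Alg1Invariant g w θ A (x :: l) s)
    (hrej : (∀ i, marg g s x i ≤ θ * w x) ∨ A < wtot w s + w x) :
    Alg1Invariant g w θ A l s := by
  refine ⟨fun y hy => hinv.fresh y (List.mem_cons_of_mem x hy), hinv.density, hinv.greedy,
    fun y hy hys => ?_⟩
  by_cases hyx : y = x
  · exact hyx ▸ hrej
  · exact hinv.rejected y (by simp [hyx, hy]) hys

lemma step [NeZero k] (hsub : KSubmodular g) (hw : ∀ x, 0 < w x) {τ : ℝ}
    (hinv : Alg1Invariant g w θ A (x :: l) s) (hxl : x ∉ l) (hx : ¬ IsBig g w τ A x) :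
    Alg1Invariant g w θ A l (alg1Step g w τ θ A s x) := by
  have hi := le_argmaxFin fun i => marg g s x i
  rw [alg1Step_of_not_isBig hx]
  split_ifs with hadd
  · exact hinv.accept hsub (fun y => (hw y).le) hxl hi (by
      have := (le_div_iff₀ (hw x)).mp hadd.1; linarith)
  · refine hinv.reject ((not_and_or.mp hadd).imp (fun hlow j => ?_) lt_of_not_ge)
    have := (div_lt_iff₀ (hw x)).mp (lt_of_not_ge hlow)
    linarith [hi j]

lemma foldl [NeZero k] (hsub : KSubmodular g) (hw : ∀ x, 0 < w x) {τ : ℝ}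
    (hinv : Alg1Invariant g w θ A l s) (hl : l.Nodup) (hsmall : ∀ x ∈ l, ¬ IsBig g w τ A x) :
    Alg1Invariant g w θ A [] (l.foldl (alg1Step g w τ θ A) s) := by
  induction l generalizing s with
  | nil => exact hinv
  | cons x l ih =>
    exact ih (hinv.step hsub hw (List.nodup_cons.mp hl).1 (hsmall x List.mem_cons_self))
      (List.nodup_cons.mp hl).2 fun y hy => hsmall y (List.mem_cons_of_mem x hy)

lemma final_bound (hsub : KSubmodular g) (hmono : KMonotone g) (hw : ∀ x, 0 ≤ w x)
    (hθ : 0 ≤ θ) (hinv : Alg1Invariant g w θ A [] s) (v : KSet X k) :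
    θ * (A - wtot w v) ≤ g s ∨ g v + g (bot X k) ≤ 2 * g s + θ * wtot w v := by
  by_cases hbudget : ∃ x, v x ≠ none ∧ s x = none ∧ A < wtot w s + w x
  · obtain ⟨x, hvx, -, hlt⟩ := hbudget
    have : A - wtot w v ≤ wtot w s := by linarith [le_wtot hw hvx]
    exact .inl ((mul_le_mul_of_nonneg_left this hθ).trans hinv.density)
  · push Not at hbudget
    have hlow : ∀ x i, s x = none → v x = some i → marg g s x i ≤ θ * w x :=
      fun x i hsx hvx => (hinv.rejected x List.not_mem_nil hsx).resolve_right
        (not_lt.mpr (hbudget x (by simp [hvx]) hsx)) i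
    have hfill := fill_le_add_sum hsub s v hlow Finset.univ
    have hsum : ∑ x ∈ Finset.univ.filter (fun x => s x = none ∧ v x ≠ none), θ * w x
        ≤ θ * wtot w v := by
      rw [wtot, Finset.mul_sum]
      exact Finset.sum_le_sum_of_subset_of_nonneg (fun y => by simp +contextual)
        fun y _ _ => mul_nonneg hθ (hw y)
    obtain ⟨m, c, hc, rfl⟩ := hinv.greedy
    have := hc.add_le_fill hsub hmono v
    exact .inr (by linarith)

end Alg1Invariant

end Invariant

theorem theorem1_monotone_general {X : Type*} [Fintype X] [DecidableEq X] {k : ℕ} [NeZero k]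
    (g : KSet X k → ℝ) (hsub : KSubmodular g)
    (hmono : KMonotone g) (hnorm : g (KSet.bot X k) = 0)
    (w : X → ℝ) (hw : ∀ x, 0 < w x)
    (τ Wbar ε : ℝ) (hτ : 0 < τ) (hW : 0 < Wbar) (hε0 : 0 < ε) (hε1 : ε ≤ 1)
    (v : KSet X k) (hgv : τ ≤ g v) (hwv : wtot w v ≤ Wbar)
    (order : List X) (hnodup : order.Nodup) (hfull : ∀ x : X, x ∈ order) :
    wtot w (alg1 g w τ (ε * τ / Wbar) ((3 - ε) / (2 * ε) * Wbar) order) ≤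
        (3 - ε) / (2 * ε) * Wbar ∧
      (1 - ε) * τ / 2 ≤ g (alg1 g w τ (ε * τ / Wbar) ((3 - ε) / (2 * ε) * Wbar) order) := by
  set θ := ε * τ / Wbar
  set A := (3 - ε) / (2 * ε) * Wbar
  have hθ : 0 ≤ θ := by positivity
  have hA : 0 ≤ A := mul_nonneg (div_nonneg (by linarith) (by linarith)) hW.le
  have hθW : θ * Wbar = ε * τ := by simp only [θ]; field_simp
  have hθA : θ * A = (3 - ε) * τ / 2 := by simp only [θ, A]; field_simp
  have hw0 : ∀ x, 0 ≤ w x := fun x => (hw x).le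
  unfold alg1
  refine ⟨wtot_foldl_alg1Step_le hw0 order (by rwa [wtot_bot]), ?_⟩
  by_cases hbig : ∃ x ∈ order, IsBig g w τ A x
  · have := le_apply_foldl_alg1Step hw hθ order (.inl hbig) (s := bot X k)
    exact le_trans (by nlinarith) this
  · push Not at hbig
    have hinv := (alg1Invariant_bot (θ := θ) (A := A) hnorm.ge hfull).foldl hsub hw hnodup hbig
    have hθv := mul_le_mul_of_nonneg_left hwv hθ
    rcases hinv.final_bound hsub hmono hw0 hθ v with hcap | hdens
    · nlinarith [mul_nonneg (sub_nonneg.mpr hε1) hτ.le]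
    · linarith

/-- **Theorem 1, monotone case.** If `g` is monotone normalized
`k`-submodular, `w > 0`, `τ > 0`, `ε ∈ (0,1]` and some `k`-set `v` has
`g v ≥ τ` and `w(v) ≤ W̄`, then the output `𝐬` of Algorithm 1 with inputs
`(τ, W̄, ε)` satisfies `w(𝐬) ≤ ((3-ε)/(2ε))·W̄` and `g 𝐬 ≥ (1-ε)τ/2`. -/
theorem theorem1_monotone {X : Type*} [Fintype X] [DecidableEq X] {k : ℕ} [NeZero k]
    (g : KSet X k → ℝ) (hnn : ∀ s : KSet X k, 0 ≤ g s) (hsub : KSubmodular g)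
    (hmono : KMonotone g) (hnorm : g (KSet.bot X k) = 0)
    (w : X → ℝ) (hw : ∀ x, 0 < w x)
    (τ Wbar ε : ℝ) (hτ : 0 < τ) (hW : 0 < Wbar) (hε0 : 0 < ε) (hε1 : ε ≤ 1)
    (v : KSet X k) (hgv : τ ≤ g v) (hwv : wtot w v ≤ Wbar)
    (order : List X) (hnodup : order.Nodup) (hfull : ∀ x : X, x ∈ order) :
    wtot w (alg1 g w τ (ε * τ / Wbar) ((3 - ε) / (2 * ε) * Wbar) order) ≤
        (3 - ε) / (2 * ε) * Wbar ∧
      (1 - ε) * τ / 2 ≤ g (alg1 g w τ (ε * τ / Wbar) ((3 - ε) / (2 * ε) * Wbar) order) :=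
  theorem1_monotone_general g hsub hmono hnorm w hw τ Wbar ε hτ hW hε0 hε1 v hgv hwv order hnodup
    hfull
end
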